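/- (Lemma 4 of the Supplemental Material.) Let d ≥ 2, m ≥ 1, and let T be the controlled-choice channel built from families (v^{(j)}_i)_{i∈Fin m} ⊂ ℂ^d with Σ_i v^{(j)}_i (v^{(j)}_i)† = I_d and amplitudes α_0 = 1, α_i = 0 (i ≠ 0); set v_j := v^{(j)}_0. Let ρ be a density matrix on ℂ^d ⊗ ℂ^d and Φ ∈ ℂ^d ⊗ ℂ^d a unit vector lying in the span of the vectors e_j ⊗ e_j with |⟨e_j ⊗ e_j, Φ⟩|² = 1/d for every j (a maximally entangled vector). If T(ρ) = Φ Φ†, then ‖v_j‖ = 1 for every j ∈ Fin d, and ((I_d − v_j v_j†) ⊗ |j⟩⟨j|) · ρ = 0 for every j ∈ Fin d (so ρ is supported on the span of the vectors v_j ⊗ e_j). -/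

import Mathlib

open Matrix Kronecker BigOperators Complex
open scoped ComplexOrder

noncomputable def Emat (d : ℕ) (j i : Fin d) : Matrix (Fin d) (Fin d) ℂ :=
  Matrix.single j i 1

noncomputable def P0 (d : ℕ) : Matrix (Fin d × Fin d) (Fin d × Fin d) ℂ :=
  ∑ j : Fin d, Emat d j j ⊗ₖ Emat d j j

noncomputable def Sop (d : ℕ) [NeZero d] (idx : Fin d → Fin d) :
    Matrix (Fin d × Fin d) (Fin d × Fin d) ℂ :=
  ∑ j : Fin d,
    (((List.finRange d).map (fun k => Emat d (j + k) (idx (j + k)))).prod) ⊗ₖ Emat d j j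

/-- Standard basis vector `e_j` of `ℂ^d`. -/
noncomputable def eVec (d : ℕ) (j : Fin d) : Fin d → ℂ := fun i => if i = j then 1 else 0

/-- The vector `e_j ⊗ e_j ∈ ℂ^d ⊗ ℂ^d`. -/
noncomputable def ejj (d : ℕ) (j : Fin d) : Fin d × Fin d → ℂ :=
  fun p => eVec d j p.1 * eVec d j p.2

/-- The encoded state `ρ_x = Σ_i (A_{x,i} ⊗ I) ρ* (A_{x,i} ⊗ I)†`. -/
noncomputable def encode (d D m : ℕ) (A : Fin d → Fin m → Matrix (Fin d) (Fin D) ℂ)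
    (ρ : Matrix (Fin D × Fin d) (Fin D × Fin d) ℂ) (x : Fin d) :
    Matrix (Fin d × Fin d) (Fin d × Fin d) ℂ :=
  ∑ i : Fin m, (A x i ⊗ₖ (1 : Matrix (Fin d) (Fin d) ℂ)) * ρ *
    (A x i ⊗ₖ (1 : Matrix (Fin d) (Fin d) ℂ))ᴴ

/-- The controlled-choice Kraus operators `T_{i_0,…,i_{d−1}} =
Σ_j (Π_{l≠j} α_{i_l}) e_j (v^{(j)}_{i_j})† ⊗ |j⟩⟨j|` with `α_0 = 1`, `α_i = 0` for `i ≠ 0`. -/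
noncomputable def Tkraus (d m : ℕ) [NeZero m] (v : Fin d → Fin m → Fin d → ℂ)
    (idx : Fin d → Fin m) : Matrix (Fin d × Fin d) (Fin d × Fin d) ℂ :=
  ∑ j : Fin d, (∏ l ∈ Finset.univ.erase j, (if idx l = 0 then (1 : ℂ) else 0)) •
    (vecMulVec (eVec d j) (star (v j (idx j))) ⊗ₖ Emat d j j)

/-!
Only the entries `((j,j),(k,k))` of `T(ρ)` are needed. By completeness of the family `v^{(j)}`,
the entry with `k = j` is the trace of the `j`-th diagonal block `ρ_j` of `ρ`, so `tr ρ_j = 1/d`;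
for `k ≠ j` only the Kraus operator with all indices `0` contributes, and the entry is
`⟨v_j ⊗ e_j, ρ (v_k ⊗ e_k)⟩`, of modulus `1/d`. Writing `q_j := ⟨v_j ⊗ e_j, ρ (v_j ⊗ e_j)⟩ ≤ tr ρ_j`,
Cauchy–Schwarz for the form of `ρ` gives `1/d² ≤ q_j q_k`, so with `d ≥ 2` every `q_j = tr ρ_j`.
Then `q_j ≤ ‖v_j‖² tr ρ_j` and `‖v_j‖ ≤ 1` (completeness again) make `v_j` a unit vector, and the
projection `P = (I - v_j v_j†) ⊗ |j⟩⟨j|` satisfies `tr (P ρ) = tr ρ_j - q_j = 0`, which forces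
`P ρ = 0` because `ρ` is positive semidefinite.
-/

namespace Matrix

section PosSemidef

variable {𝕜 n : Type*} [RCLike 𝕜] [Fintype n] {A : Matrix n n 𝕜}

theorem PosSemidef.exists_eq_conjTranspose_mul_self (hA : A.PosSemidef) :
    ∃ C : Matrix n n 𝕜, A = Cᴴ * C := by
  classical
  open scoped MatrixOrder in
  exact CStarAlgebra.nonneg_iff_eq_star_mul_self.mp hA.nonneg

theorem PosSemidef.exists_linearMap_dotProduct_mulVec_eq_inner (hA : A.PosSemidef) :
    ∃ g : (n → 𝕜) →ₗ[𝕜] EuclideanSpace 𝕜 n, ∀ x y, star x ⬝ᵥ A *ᵥ y = inner 𝕜 (g x) (g y) := by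
  obtain ⟨C, rfl⟩ := hA.exists_eq_conjTranspose_mul_self
  refine ⟨(WithLp.linearEquiv 2 𝕜 (n → 𝕜)).symm.toLinearMap ∘ₗ C.mulVecLin, fun x y => ?_⟩
  change star x ⬝ᵥ (Cᴴ * C) *ᵥ y = (C *ᵥ y) ⬝ᵥ star (C *ᵥ x)
  rw [← mulVec_mulVec, dotProduct_mulVec, star_mulVec, dotProduct_comm]

theorem PosSemidef.norm_dotProduct_mulVec_sq_le (hA : A.PosSemidef) (x y : n → 𝕜) :
    ‖star x ⬝ᵥ A *ᵥ y‖ ^ 2 ≤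
      RCLike.re (star x ⬝ᵥ A *ᵥ x) * RCLike.re (star y ⬝ᵥ A *ᵥ y) := by
  obtain ⟨g, hg⟩ := hA.exists_linearMap_dotProduct_mulVec_eq_inner
  simp only [hg, inner_self_eq_norm_sq, ← mul_pow]
  exact pow_le_pow_left₀ (norm_nonneg _) (norm_inner_le_norm _ _) 2

theorem PosSemidef.re_dotProduct_mulVec_le_mul_trace (hA : A.PosSemidef) (x : n → 𝕜) :
    RCLike.re (star x ⬝ᵥ A *ᵥ x) ≤ (∑ a, ‖x a‖ ^ 2) * RCLike.re A.trace := by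
  classical
  obtain ⟨g, hg⟩ := hA.exists_linearMap_dotProduct_mulVec_eq_inner
  have hcol (a : n) : ‖g (Pi.single a 1)‖ ^ 2 = RCLike.re (A a a) := by
    rw [← inner_self_eq_norm_sq (𝕜 := 𝕜), ← hg]
    simp
  have hx : g x = ∑ a, x a • g (Pi.single a 1) := by
    conv_lhs => rw [← Finset.univ_sum_single x]
    simp only [map_sum, ← map_smul, ← Pi.single_smul, smul_eq_mul, mul_one]
  calc RCLike.re (star x ⬝ᵥ A *ᵥ x) = ‖g x‖ ^ 2 := by rw [hg, inner_self_eq_norm_sq]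
    _ ≤ (∑ a, ‖x a‖ * ‖g (Pi.single a 1)‖) ^ 2 := by
        rw [hx]
        gcongr
        exact (norm_sum_le _ _).trans_eq (by simp [norm_smul])
    _ ≤ (∑ a, ‖x a‖ ^ 2) * ∑ a, ‖g (Pi.single a 1)‖ ^ 2 := Finset.sum_mul_sq_le_sq_mul_sq _ _ _
    _ = _ := by simp [hcol, trace]

theorem PosSemidef.mul_eq_zero_of_trace_mul_eq_zero {P : Matrix n n 𝕜} (hA : A.PosSemidef)
    (hP : P.IsHermitian) (hPP : P * P = P) (h : (P * A).trace = 0) : P * A = 0 := by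
  obtain ⟨C, rfl⟩ := hA.exists_eq_conjTranspose_mul_self
  have hCP : C * P = 0 := by
    rw [← trace_conjTranspose_mul_self_eq_zero_iff, conjTranspose_mul, hP.eq, ← h,
      ← Matrix.mul_assoc, trace_mul_comm, ← Matrix.mul_assoc, ← Matrix.mul_assoc, hPP,
      Matrix.mul_assoc]
  rw [← hP.eq, ← Matrix.mul_assoc, ← conjTranspose_mul, hCP, conjTranspose_zero, Matrix.zero_mul]

theorem PosSemidef.one_le_sum_norm_sq_of_dotProduct_mulVec_eq_trace (hA : A.PosSemidef)
    (htr : 0 < RCLike.re A.trace) {x : n → 𝕜} (hx : star x ⬝ᵥ A *ᵥ x = A.trace) :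
    1 ≤ ∑ a, ‖x a‖ ^ 2 := by
  have := hA.re_dotProduct_mulVec_le_mul_trace x
  rw [hx] at this
  exact le_of_mul_le_mul_right (by rwa [one_mul]) htr

end PosSemidef

theorem trace_mul_vecMulVec {R n : Type*} [CommSemiring R] [Fintype n] (B : Matrix n n R)
    (x y : n → R) : (B * vecMulVec x y).trace = y ⬝ᵥ B *ᵥ x := by
  rw [mul_vecMulVec, trace_vecMulVec, dotProduct_comm]

section Resolution

variable {𝕜 n ι : Type*} [RCLike 𝕜] [Fintype n] [Fintype ι] {x : ι → n → 𝕜}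

theorem dotProduct_star_self_eq_sum_norm_sq (w : n → 𝕜) :
    star w ⬝ᵥ w = ((∑ a, ‖w a‖ ^ 2 : ℝ) : 𝕜) := by
  simp [dotProduct, RCLike.conj_mul]

variable [DecidableEq n]

theorem sum_star_dotProduct_mulVec_eq_trace (hx : ∑ i, vecMulVec (x i) (star (x i)) = 1)
    (B : Matrix n n 𝕜) : ∑ i, star (x i) ⬝ᵥ B *ᵥ x i = B.trace := by
  simp_rw [← trace_mul_vecMulVec, ← trace_sum, ← Matrix.mul_sum, hx, Matrix.mul_one]

theorem PosSemidef.re_dotProduct_mulVec_le_re_trace {B : Matrix n n 𝕜} (hB : B.PosSemidef)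
    (hx : ∑ i, vecMulVec (x i) (star (x i)) = 1) (i₀ : ι) :
    RCLike.re (star (x i₀) ⬝ᵥ B *ᵥ x i₀) ≤ RCLike.re B.trace := by
  rw [← sum_star_dotProduct_mulVec_eq_trace hx, map_sum]
  exact Finset.single_le_sum (fun i _ => hB.re_dotProduct_nonneg (x i)) (Finset.mem_univ i₀)

theorem sum_norm_sq_le_one_of_sum_vecMulVec_eq_one
    (hx : ∑ i, vecMulVec (x i) (star (x i)) = 1) (i₀ : ι) : ∑ a, ‖x i₀ a‖ ^ 2 ≤ 1 := by
  set w := x i₀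
  set s := ∑ a, ‖w a‖ ^ 2
  have hs : star w ⬝ᵥ w = s := dotProduct_star_self_eq_sum_norm_sq w
  have hsum : (s : 𝕜) = ∑ i, star w ⬝ᵥ vecMulVec (x i) (star (x i)) *ᵥ w := by
    rw [← hs, ← dotProduct_sum, ← sum_mulVec, hx, one_mulVec]
  have hsq : s ^ 2 ≤ s := by
    calc s ^ 2 = RCLike.re (star w ⬝ᵥ vecMulVec w (star w) *ᵥ w) := by
          simp [vecMulVec_mulVec, hs, sq]
      _ ≤ s := by
          rw [← RCLike.ofReal_re (K := 𝕜) s, hsum, map_sum]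
          exact Finset.single_le_sum
            (fun i _ => (posSemidef_vecMulVec_self_star (x i)).re_dotProduct_nonneg w)
            (Finset.mem_univ i₀)
  nlinarith [Finset.sum_nonneg fun a (_ : a ∈ Finset.univ) => sq_nonneg ‖x i₀ a‖]

end Resolution

def kronVec {R α β : Type*} [Mul R] (x : α → R) (y : β → R) : α × β → R :=
  fun p => x p.1 * y p.2

theorem PosSemidef.blockDiag {R α β : Type*} [CommRing R] [PartialOrder R] [StarRing R]
    {ρ : Matrix (α × β) (α × β) R} (hρ : ρ.PosSemidef) (j : β) : (ρ.blockDiag j).PosSemidef :=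
  hρ.submatrix _

section Block

variable {α β : Type*} [Fintype α] [Fintype β] [DecidableEq β]

theorem star_kronVec_single_dotProduct_mulVec {R : Type*} [CommSemiring R] [StarRing R]
    (ρ : Matrix (α × β) (α × β) R) (x y : α → R) (j : β) :
    star (kronVec x (Pi.single j 1)) ⬝ᵥ ρ *ᵥ kronVec y (Pi.single j 1) =
      star x ⬝ᵥ ρ.blockDiag j *ᵥ y := by
  simp [kronVec, dotProduct, mulVec, Fintype.sum_prod_type, Pi.single_apply, Finset.mul_sum,
    apply_ite star, ite_mul, blockDiag_apply]

theorem trace_kronecker_single_mul {R : Type*} [CommSemiring R] (X : Matrix α α R)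
    (ρ : Matrix (α × β) (α × β) R) (j : β) :
    ((X ⊗ₖ single j j 1) * ρ).trace = (X * ρ.blockDiag j).trace := by
  simp [trace, mul_apply, Fintype.sum_prod_type, single_apply, ite_and, blockDiag_apply]

theorem PosSemidef.one_sub_vecMulVec_kronecker_single_mul_eq_zero {𝕜 : Type*} [RCLike 𝕜]
    [DecidableEq α] {ρ : Matrix (α × β) (α × β) 𝕜} (hρ : ρ.PosSemidef) {w : α → 𝕜}
    (hw : star w ⬝ᵥ w = 1) {j : β} (hj : star w ⬝ᵥ ρ.blockDiag j *ᵥ w = (ρ.blockDiag j).trace) :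
    ((1 - vecMulVec w (star w)) ⊗ₖ single j j 1) * ρ = 0 := by
  have hQ : vecMulVec w (star w) * vecMulVec w (star w) = vecMulVec w (star w) := by
    rw [vecMulVec_mul_vecMulVec, hw, one_smul]
  refine hρ.mul_eq_zero_of_trace_mul_eq_zero ?_ ?_ ?_
  · simp [IsHermitian, conjTranspose_kronecker, conjTranspose_vecMulVec, conjTranspose_single]
  · rw [← mul_kronecker_mul, single_mul_single_same, mul_one]
    simp [Matrix.sub_mul, Matrix.mul_sub, hQ]
  · rw [trace_kronecker_single_mul, Matrix.sub_mul, Matrix.one_mul, trace_sub,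
      trace_mul_comm, trace_mul_vecMulVec, hj, sub_self]

end Block

end Matrix

theorem Fintype.sum_ite_forall_ne_eq_zero {ι κ M : Type*} [Fintype ι] [DecidableEq ι]
    [Fintype κ] [Zero κ] [AddCommMonoid M] (j : ι) [∀ f : ι → κ, Decidable (∀ l ≠ j, f l = 0)]
    (F : (ι → κ) → M) :
    ∑ f : ι → κ, (if ∀ l ≠ j, f l = 0 then F f else 0) = ∑ i, F (Pi.single j i) := by
  refine (Fintype.sum_of_injective _ (Pi.single_injective j) _ _ (fun f hf => ?_)
    (fun i => by simp +contextual)).symm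
  refine if_neg fun h => hf ⟨f j, funext fun l => ?_⟩
  by_cases hl : l = j
  · subst hl; simp
  · simp [hl, h l hl]

theorem eVec_eq_single {d : ℕ} (j : Fin d) : eVec d j = Pi.single j 1 := by
  ext i
  simp [eVec, Pi.single_apply]

theorem star_ejj_dotProduct {d : ℕ} (Φ : Fin d × Fin d → ℂ) (j : Fin d) :
    star (ejj d j) ⬝ᵥ Φ = Φ (j, j) := by
  simp [ejj, eVec_eq_single, dotProduct, Fintype.sum_prod_type, Pi.single_apply, apply_ite,
    ite_mul]

section ControlledChoice

variable {d m : ℕ} [NeZero m] (v : Fin d → Fin m → Fin d → ℂ)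

noncomputable def controlledChoice (ρ : Matrix (Fin d × Fin d) (Fin d × Fin d) ℂ) :
    Matrix (Fin d × Fin d) (Fin d × Fin d) ℂ :=
  ∑ idx : Fin d → Fin m, Tkraus d m v idx * ρ * (Tkraus d m v idx)ᴴ

theorem Tkraus_apply_diag (idx : Fin d → Fin m) (j : Fin d) :
    Tkraus d m v idx (j, j) =
      (if ∀ l ≠ j, idx l = 0 then 1 else 0 : ℂ) • star (kronVec (v j (idx j)) (Pi.single j 1)) := by
  ext r
  simp only [Tkraus, Matrix.sum_apply, Matrix.smul_apply]
  simp [eVec_eq_single, Emat, Finset.prod_boole, kroneckerMap_apply, vecMulVec_apply,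
    single_apply, kronVec, Pi.single_apply, ite_and]
  by_cases h : r.2 = j
  · simp [h, eq_comm]
  · simp [h, Ne.symm h]

theorem controlledChoice_apply_diag (ρ : Matrix (Fin d × Fin d) (Fin d × Fin d) ℂ)
    (j k : Fin d) :
    controlledChoice v ρ (j, j) (k, k) =
      ∑ idx : Fin d → Fin m, if (∀ l ≠ j, idx l = 0) ∧ ∀ l ≠ k, idx l = 0 then
        star (kronVec (v j (idx j)) (Pi.single j 1)) ⬝ᵥ ρ *ᵥ kronVec (v k (idx k)) (Pi.single k 1)
      else 0 := by
  simp only [controlledChoice, Matrix.sum_apply, mul_mul_apply]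
  refine Finset.sum_congr rfl fun idx _ => ?_
  change Tkraus d m v idx (j, j) ⬝ᵥ ρ *ᵥ star (Tkraus d m v idx (k, k)) = _
  rw [Tkraus_apply_diag, Tkraus_apply_diag]
  split_ifs <;> simp_all

theorem controlledChoice_apply_diag_self (ρ : Matrix (Fin d × Fin d) (Fin d × Fin d) ℂ)
    (j : Fin d) :
    controlledChoice v ρ (j, j) (j, j) = ∑ i, star (v j i) ⬝ᵥ ρ.blockDiag j *ᵥ v j i := by
  simp only [controlledChoice_apply_diag, and_self, star_kronVec_single_dotProduct_mulVec]
  rw [Fintype.sum_ite_forall_ne_eq_zero]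
  simp

theorem controlledChoice_apply_diag_of_ne (ρ : Matrix (Fin d × Fin d) (Fin d × Fin d) ℂ)
    {j k : Fin d} (hjk : j ≠ k) :
    controlledChoice v ρ (j, j) (k, k) =
      star (kronVec (v j 0) (Pi.single j 1)) ⬝ᵥ ρ *ᵥ kronVec (v k 0) (Pi.single k 1) := by
  have hzero (idx : Fin d → Fin m) : ((∀ l ≠ j, idx l = 0) ∧ ∀ l ≠ k, idx l = 0) ↔ idx = 0 := by
    refine ⟨fun ⟨hj, hk⟩ => funext fun l => ?_, by rintro rfl; simp⟩
    by_cases hl : l = j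
    · exact hl ▸ hk j hjk
    · exact hj l hl
  simp [controlledChoice_apply_diag, hzero]


variable {v} {ρ : Matrix (Fin d × Fin d) (Fin d × Fin d) ℂ} {Φ : Fin d × Fin d → ℂ}

theorem trace_blockDiag_eq_of_controlledChoice_eq
    (hv : ∀ j, ∑ i, vecMulVec (v j i) (star (v j i)) = 1)
    (hT : controlledChoice v ρ = vecMulVec Φ (star Φ)) (j : Fin d) :
    (ρ.blockDiag j).trace = ((‖Φ (j, j)‖ ^ 2 : ℝ) : ℂ) := by
  rw [← sum_star_dotProduct_mulVec_eq_trace (hv j), ← controlledChoice_apply_diag_self, hT,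
    vecMulVec_apply, Pi.star_apply, RCLike.star_def, RCLike.mul_conj]
  norm_cast

theorem norm_star_kronVec_dotProduct_mulVec_of_controlledChoice_eq
    (hT : controlledChoice v ρ = vecMulVec Φ (star Φ)) {j k : Fin d} (hjk : j ≠ k) :
    ‖star (kronVec (v j 0) (Pi.single j 1)) ⬝ᵥ ρ *ᵥ kronVec (v k 0) (Pi.single k 1)‖ =
      ‖Φ (j, j)‖ * ‖Φ (k, k)‖ := by
  rw [← controlledChoice_apply_diag_of_ne v ρ hjk, hT, vecMulVec_apply, norm_mul, Pi.star_apply,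
    norm_star]

theorem star_dotProduct_mulVec_blockDiag_eq_trace_of_controlledChoice_eq (hd : 2 ≤ d)
    (hv : ∀ j, ∑ i, vecMulVec (v j i) (star (v j i)) = 1) (hρ : ρ.PosSemidef) {c : ℝ}
    (hΦ : ∀ j, ‖Φ (j, j)‖ ^ 2 = c) (hT : controlledChoice v ρ = vecMulVec Φ (star Φ))
    (k : Fin d) : star (v k 0) ⬝ᵥ ρ.blockDiag k *ᵥ v k 0 = (ρ.blockDiag k).trace := by
  set u : Fin d → Fin d × Fin d → ℂ := fun j => kronVec (v j 0) (Pi.single j 1)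
  set q : Fin d → ℝ := fun j => RCLike.re (star (u j) ⬝ᵥ ρ *ᵥ u j)
  have htrace (j : Fin d) : (ρ.blockDiag j).trace = c := by
    rw [trace_blockDiag_eq_of_controlledChoice_eq hv hT, hΦ]
  have hq_block (j : Fin d) : star (u j) ⬝ᵥ ρ *ᵥ u j = star (v j 0) ⬝ᵥ ρ.blockDiag j *ᵥ v j 0 :=
    star_kronVec_single_dotProduct_mulVec ρ _ _ j
  have hq_le (j : Fin d) : q j ≤ c := by
    simpa [q, hq_block, htrace] using (hρ.blockDiag j).re_dotProduct_mulVec_le_re_trace (hv j) 0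
  have hq_nonneg (j : Fin d) : 0 ≤ q j := hρ.re_dotProduct_nonneg (u j)
  have : Nontrivial (Fin d) := Fin.nontrivial_iff_two_le.mpr hd
  obtain ⟨j, hjk⟩ := exists_ne k
  have hCS : c ^ 2 ≤ q j * q k := by
    have := hρ.norm_dotProduct_mulVec_sq_le (u j) (u k)
    rwa [norm_star_kronVec_dotProduct_mulVec_of_controlledChoice_eq hT hjk, mul_pow, hΦ, hΦ,
      ← sq] at this
  have hqk : q k = c := by
    nlinarith [hq_le j, hq_le k, hq_nonneg k, mul_le_mul_of_nonneg_right (hq_le j) (hq_nonneg k)]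
  rw [← hq_block, htrace]
  exact Complex.ext hqk (hρ.isHermitian.im_star_dotProduct_mulVec_self (u k))

end ControlledChoice

theorem stmt_11_general (d m : ℕ) [NeZero m] (hd : 2 ≤ d)
    (v : Fin d → Fin m → Fin d → ℂ)
    (hv : ∀ j : Fin d,
      ∑ i : Fin m, vecMulVec (v j i) (star (v j i)) = (1 : Matrix (Fin d) (Fin d) ℂ))
    (ρ : Matrix (Fin d × Fin d) (Fin d × Fin d) ℂ)
    (hpos : ρ.PosSemidef)
    (Φ : Fin d × Fin d → ℂ)
    (hmax : ∀ j : Fin d, ‖star (ejj d j) ⬝ᵥ Φ‖ ^ 2 = 1 / (d : ℝ))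
    (hT : ∑ idx : Fin d → Fin m, Tkraus d m v idx * ρ * (Tkraus d m v idx)ᴴ =
      vecMulVec Φ (star Φ)) :
    (∀ j : Fin d, Real.sqrt (∑ a : Fin d, ‖v j 0 a‖ ^ 2) = 1) ∧
    (∀ j : Fin d,
      (((1 : Matrix (Fin d) (Fin d) ℂ) - vecMulVec (v j 0) (star (v j 0))) ⊗ₖ Emat d j j) * ρ
        = 0) := by
  have hΦ (j : Fin d) : ‖Φ (j, j)‖ ^ 2 = 1 / d := star_ejj_dotProduct Φ j ▸ hmax j
  have hq := star_dotProduct_mulVec_blockDiag_eq_trace_of_controlledChoice_eq hd hv hpos hΦ hT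
  have hnorm (j : Fin d) : ∑ a, ‖v j 0 a‖ ^ 2 = 1 := by
    refine le_antisymm (sum_norm_sq_le_one_of_sum_vecMulVec_eq_one (hv j) 0)
      ((hpos.blockDiag j).one_le_sum_norm_sq_of_dotProduct_mulVec_eq_trace ?_ (hq j))
    rw [trace_blockDiag_eq_of_controlledChoice_eq hv hT, hΦ, RCLike.re_to_complex,
      Complex.ofReal_re]
    exact one_div_pos.mpr (by exact_mod_cast (by omega : 0 < d))
  refine ⟨fun j => by rw [hnorm j, Real.sqrt_one], fun j => ?_⟩
  refine hpos.one_sub_vecMulVec_kronecker_single_mul_eq_zero ?_ (hq j)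
  rw [dotProduct_star_self_eq_sum_norm_sq, hnorm j, RCLike.ofReal_one]

/-- Lemma 4: if the controlled-choice channel maps `ρ` to a maximally
entangled pure state of the decoherence-free subspace, then every `v_j` is a unit vector and
`ρ` is supported on the span of the vectors `v_j ⊗ e_j`. -/
theorem stmt_11 (d m : ℕ) [NeZero d] [NeZero m] (hd : 2 ≤ d)
    (v : Fin d → Fin m → Fin d → ℂ)
    (hv : ∀ j : Fin d,
      ∑ i : Fin m, vecMulVec (v j i) (star (v j i)) = (1 : Matrix (Fin d) (Fin d) ℂ))
    (ρ : Matrix (Fin d × Fin d) (Fin d × Fin d) ℂ)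
    (hpos : ρ.PosSemidef) (htr : ρ.trace = 1)
    (Φ : Fin d × Fin d → ℂ)
    (hunit : star Φ ⬝ᵥ Φ = 1)
    (hspan : (P0 d).mulVec Φ = Φ)
    (hmax : ∀ j : Fin d, ‖star (ejj d j) ⬝ᵥ Φ‖ ^ 2 = 1 / (d : ℝ))
    (hT : ∑ idx : Fin d → Fin m, Tkraus d m v idx * ρ * (Tkraus d m v idx)ᴴ =
      vecMulVec Φ (star Φ)) :
    (∀ j : Fin d, Real.sqrt (∑ a : Fin d, ‖v j 0 a‖ ^ 2) = 1) ∧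
    (∀ j : Fin d,
      (((1 : Matrix (Fin d) (Fin d) ℂ) - vecMulVec (v j 0) (star (v j 0))) ⊗ₖ Emat d j j) * ρ
        = 0) :=
  stmt_11_general d m hd v hv ρ hpos Φ hmax hT
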